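/- For the vector field X associated to u̇ = -v + h, v̇ = u + h, ẇ = -w + h with h(u,v,w) = -(1/2)u² - (1/2)v² + a₃w² - uw + vw, the polynomial F(u,v,w) = w + ((u+w)² + (v-w)²)/2 - (1+a₃)w² satisfies XF = (-1 - 2u + 2a₃w)·F, i.e., F = 0 is an invariant algebraic surface with cofactor K(u,v,w) = -1 - 2u + 2a₃w. -/

import Mathlib

noncomputable def h4 (a₃ u v w : ℝ) : ℝ :=
  -(1/2)*u^2 - (1/2)*v^2 + a₃*w^2 - u*w + v*w

noncomputable def F4 (a₃ u v w : ℝ) : ℝ :=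
  w + ((u + w)^2 + (v - w)^2)/2 - (1 + a₃)*w^2

theorem deriv_F4_u (a₃ u v w : ℝ) : deriv (fun s => F4 a₃ s v w) u = u + w := by
  simp (disch := fun_prop) only [F4, deriv_fun_add, deriv_fun_sub, deriv_fun_mul, deriv_div_const,
    deriv_fun_pow, deriv_id'', deriv_const']
  ring

theorem deriv_F4_v (a₃ u v w : ℝ) : deriv (fun s => F4 a₃ u s w) v = v - w := by
  simp (disch := fun_prop) only [F4, deriv_fun_add, deriv_fun_sub, deriv_fun_mul, deriv_div_const,
    deriv_fun_pow, deriv_id'', deriv_const']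
  ring

theorem deriv_F4_w (a₃ u v w : ℝ) :
    deriv (fun s => F4 a₃ u v s) w = 1 + (u + w) - (v - w) - 2 * (1 + a₃) * w := by
  simp (disch := fun_prop) only [F4, deriv_fun_add, deriv_fun_sub, deriv_fun_mul, deriv_div_const,
    deriv_fun_pow, deriv_id'', deriv_const', deriv_const_add_id', deriv_const_sub_id']
  ring

/-- F = 0 is an invariant algebraic surface with cofactor K = -1 - 2u + 2a₃w. -/
theorem stmt_4 : ∀ a₃ u v w : ℝ,
    (-v + h4 a₃ u v w) * deriv (fun s => F4 a₃ s v w) u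
    + (u + h4 a₃ u v w) * deriv (fun s => F4 a₃ u s w) v
    + (-w + h4 a₃ u v w) * deriv (fun s => F4 a₃ u v s) w
    = (-1 - 2*u + 2*a₃*w) * F4 a₃ u v w := by
  intro a₃ u v w
  rw [deriv_F4_u, deriv_F4_v, deriv_F4_w, h4, F4]
  ring
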